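/- For a, b, a', b' ≥ 0 with a + b > 0 and a' + b' > 0, |（a-b)/(a+b) - (a'-b')/(a'+b')| ≤ 2(|a - a'| + |b - b'|)/max(a + b, a' + b'). In particular the LiveVal valuation f(a,b) = (a-b)/(a+b) is Lipschitz-continuous on regions where a + b ≥ c > 0, with |f(a,b) - f(a',b')| ≤ (2/c)(|a-a'| + |b-b'|). -/
import Mathlib


theorem stmt_11 (a b a' b' : ℝ) (ha : 0 ≤ a) (hb : 0 ≤ b) (ha' : 0 ≤ a') (hb' : 0 ≤ b')
    (hab : 0 < a + b) (hab' : 0 < a' + b') :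
    |(a - b) / (a + b) - (a' - b') / (a' + b')| ≤
      2 * (|a - a'| + |b - b'|) / max (a + b) (a' + b') := by
  have hM : 0 < max (a + b) (a' + b') := lt_max_of_lt_left hab
  have h1 : (a - b) / (a + b) - (a' - b') / (a' + b')
      = 2 * (a * b' - a' * b) / ((a + b) * (a' + b')) := by
    field_simp
    ring
  rw [h1, abs_div, abs_of_pos (mul_pos hab hab'), div_le_div_iff₀ (mul_pos hab hab') hM]
  have hmin : |a * b' - a' * b| ≤ min (a + b) (a' + b') * (|a - a'| + |b - b'|) := by
    rcases le_total (a + b) (a' + b') with h | h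
    · rw [min_eq_left h]
      have : a * b' - a' * b = a * (b' - b) + b * (a - a') := by ring
      rw [this]
      calc |a * (b' - b) + b * (a - a')| ≤ |a * (b' - b)| + |b * (a - a')| := abs_add_le _ _
        _ = a * |b - b'| + b * |a - a'| := by
            rw [abs_mul, abs_mul, abs_of_nonneg ha, abs_of_nonneg hb, abs_sub_comm b' b]
        _ ≤ (a + b) * (|a - a'| + |b - b'|) := by nlinarith [abs_nonneg (a - a'), abs_nonneg (b - b')]
    · rw [min_eq_right h]
      have : a * b' - a' * b = a' * (b' - b) + b' * (a - a') := by ring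
      rw [this]
      calc |a' * (b' - b) + b' * (a - a')| ≤ |a' * (b' - b)| + |b' * (a - a')| := abs_add_le _ _
        _ = a' * |b - b'| + b' * |a - a'| := by
            rw [abs_mul, abs_mul, abs_of_nonneg ha', abs_of_nonneg hb', abs_sub_comm b' b]
        _ ≤ (a' + b') * (|a - a'| + |b - b'|) := by nlinarith [abs_nonneg (a - a'), abs_nonneg (b - b')]
  have hmm : min (a + b) (a' + b') * max (a + b) (a' + b') = (a + b) * (a' + b') :=
    min_mul_max _ _
  calc |2 * (a * b' - a' * b)| * max (a + b) (a' + b')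
      = 2 * |a * b' - a' * b| * max (a + b) (a' + b') := by
        rw [abs_mul, abs_two]
    _ ≤ 2 * (min (a + b) (a' + b') * (|a - a'| + |b - b'|)) * max (a + b) (a' + b') := by
        have := hM.le
        nlinarith
    _ = 2 * (|a - a'| + |b - b'|) * ((a + b) * (a' + b')) := by rw [← hmm]; ring
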